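/- Let n ≥ 1 and let S be a skew Boolean algebra freely generated (over the variety of all skew Boolean algebras) by a set of n distinct elements. Then the number α of atoms of S satisfies 4·α = n(n+1)·2^{n}, i.e. α = n(n+1)·2^{n−2}. -/

import Mathlib

universe u

/-- A skew Boolean algebra. -/
class SBA (S : Type u) where
  wedge : S → S → S
  vee : S → S → S
  diff : S → S → S
  zero : S
  wedge_assoc : ∀ x y z : S, wedge (wedge x y) z = wedge x (wedge y z)
  vee_assoc : ∀ x y z : S, vee (vee x y) z = vee x (vee y z)
  absorb1 : ∀ x y : S, wedge x (vee x y) = x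
  absorb2 : ∀ x y : S, wedge (vee y x) x = x
  absorb3 : ∀ x y : S, vee x (wedge x y) = x
  absorb4 : ∀ x y : S, vee (wedge y x) x = x
  sdistrib1 : ∀ x y z : S, wedge x (vee y z) = vee (wedge x y) (wedge x z)
  sdistrib2 : ∀ x y z : S, wedge (vee x y) z = vee (wedge x z) (wedge y z)
  zero_wedge : ∀ x : S, wedge zero x = zero
  wedge_zero : ∀ x : S, wedge x zero = zero
  zero_vee : ∀ x : S, vee zero x = x
  vee_zero : ∀ x : S, vee x zero = x
  diff_ax1 : ∀ x y : S, vee (wedge (wedge x y) x) (diff x y) = x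
  diff_ax2 : ∀ x y : S, wedge (wedge (wedge x y) x) (diff x y) = zero
  diff_ax3 : ∀ x y : S, wedge (diff x y) (wedge (wedge x y) x) = zero

namespace SBA

scoped infixl:70 " ⋏ " => SBA.wedge
scoped infixl:65 " ⋎ " => SBA.vee
scoped infixl:70 " ∖ " => SBA.diff

variable {S : Type u} [SBA S]

/-- Green's relation `D`: `x D y` iff `x⋏y⋏x = x` and `y⋏x⋏y = y`. -/
def Drel (x y : S) : Prop := x ⋏ y ⋏ x = x ∧ y ⋏ x ⋏ y = y

/-- The natural partial order: `x ≤ y` iff `x⋏y = x = y⋏x`. -/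
def nle (x y : S) : Prop := x ⋏ y = x ∧ y ⋏ x = x

/-- An atom: a nonzero element with nothing strictly between it and `0`. -/
def IsAtom (a : S) : Prop := a ≠ zero ∧ ∀ x : S, nle x a → x = zero ∨ x = a

/-- `X` generates `S`: the only subset of `S` containing `X` and `0` and closed
under the three operations is `S` itself. -/
def Generates (X : Set S) : Prop :=
  ∀ T : Set S, X ⊆ T → zero ∈ T →
    (∀ a b : S, a ∈ T → b ∈ T → a ⋏ b ∈ T ∧ a ⋎ b ∈ T ∧ a ∖ b ∈ T) →
    T = Set.univ

/-- A homomorphism of skew Boolean algebras. -/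
def IsHom {T : Type u} [SBA T] (f : S → T) : Prop :=
  (∀ a b : S, f (a ⋏ b) = f a ⋏ f b) ∧ (∀ a b : S, f (a ⋎ b) = f a ⋎ f b) ∧
    (∀ a b : S, f (a ∖ b) = f a ∖ f b) ∧ f zero = zero

end SBA

open SBA

/-- A left-handed skew Boolean algebra. -/
class LeftHanded (S : Type u) [SBA S] : Prop where
  lh_wedge : ∀ x y : S, x ⋏ y ⋏ x = x ⋏ y
  lh_vee : ∀ x y : S, x ⋎ y ⋎ x = y ⋎ x

/-- `S` is freely generated by `X` over the variety of all skew Boolean algebras. -/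
def FreelyGenerates (S : Type u) [SBA S] (X : Set S) : Prop :=
  Generates X ∧
    ∀ (T : Type u) [SBA T], ∀ g : X → T,
      ∃ f : S → T, IsHom f ∧ ∀ x : X, f x = g x

/-- `S` is freely generated by `X` over the variety of left-handed skew Boolean algebras. -/
def LFreelyGenerates (S : Type u) [SBA S] [LeftHanded S] (X : Set S) : Prop :=
  Generates X ∧
    ∀ (T : Type u) [SBA T] [LeftHanded T], ∀ g : X → T,
      ∃ f : S → T, IsHom f ∧ ∀ x : X, f x = g x

/-!
For generators `v : ι → T` of a skew Boolean algebra and `A ⊆ ι`, put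
`s_A = (⋀_{j ∈ A} v j) ∖ (⋁_{j ∉ A} v j)` and `e_A(a, b) = v a ⋏ s_A ⋏ v b` for `a, b ∈ A`.
Terms with different `A` are orthogonal, those with the same `A` multiply like the rectangular
band `A × A`, and splitting along one generator after the other (`x ∖ D` is the join of
`(x ⋏ k ⋏ x) ∖ D` and `x ∖ (D ⋎ k)`) shows that `v i` is the join of the `e_A(i, i)` with `i ∈ A`.
Hence `w ↦ ⋁_A e_A(w_A)` is a homomorphism from `∏_{A ⊆ ι} ({0} ∪ A × A)` to `T` extending `v`,
and this product is the free algebra on `ι`. Its atoms have exactly one nonzero coordinate, so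
there are `∑_A |A|² = n (n + 1) 2^(n-2)` of them.
-/

theorem Finset.injOn_insert_powerset {α : Type*} [DecidableEq α] {s : Finset α} {a : α}
    (ha : a ∉ s) : Set.InjOn (insert a) (s.powerset : Set (Finset α)) :=
  Finset.insert_erase_invOn.2.injOn.mono fun _ ht =>
    Finset.notMem_mono (Finset.mem_powerset.1 ht) ha

theorem Finset.map_toList_insert_perm {α β : Type*} [DecidableEq α] (f : α → β) {s : Finset α}
    {a : α} (ha : a ∉ s) : ((insert a s).toList.map f).Perm (s.toList.map f ++ [f a]) := by
  rw [← List.map_singleton (f := f) (a := a), ← List.map_append]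
  exact ((Finset.toList_insert ha).trans (List.perm_append_singleton _ _).symm).map f

namespace SBA

section

variable {S : Type*} [SBA S]

theorem wedge_idem (x : S) : x ⋏ x = x := by
  simpa only [absorb3] using absorb1 x (x ⋏ x)

theorem vee_idem (x : S) : x ⋎ x = x := by
  simpa only [absorb1] using absorb3 x (x ⋎ x)

theorem wedge_left_idem (x y : S) : x ⋏ (x ⋏ y) = x ⋏ y := by
  rw [← wedge_assoc, wedge_idem]

theorem wedge_wedge_wedge_idem (x y : S) : x ⋏ (y ⋏ (x ⋏ y)) = x ⋏ y := by
  rw [← wedge_assoc, wedge_idem]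

theorem wedge_wedge_wedge_left_idem (x y w : S) : x ⋏ (y ⋏ (x ⋏ (y ⋏ w))) = x ⋏ (y ⋏ w) := by
  rw [← wedge_assoc x y w, ← wedge_assoc x y (x ⋏ y ⋏ w), wedge_left_idem]

theorem eq_zero_of_vee_eq_zero {x y : S} (h : x ⋎ y = zero) : x = zero ∧ y = zero :=
  ⟨by simpa only [h, wedge_zero] using (absorb1 x y).symm,
    by simpa only [h, zero_wedge] using (absorb2 y x).symm⟩

theorem orthogonal_of_sandwich_eq_zero {x y : S} (h : x ⋏ y ⋏ x = zero) :
    x ⋏ y = zero ∧ y ⋏ x = zero := by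
  constructor
  · calc x ⋏ y = (x ⋏ y ⋏ x) ⋏ y := by rw [wedge_assoc (x ⋏ y) x y, wedge_idem]
      _ = zero := by rw [h, zero_wedge]
  · calc y ⋏ x = (y ⋏ x) ⋏ (y ⋏ x) := (wedge_idem _).symm
      _ = y ⋏ (x ⋏ y ⋏ x) := by simp only [wedge_assoc]
      _ = zero := by rw [h, wedge_zero]

/-! ### The natural partial order -/

theorem nle_refl (x : S) : nle x x := ⟨wedge_idem x, wedge_idem x⟩

theorem nle_trans {a b c : S} (h1 : nle a b) (h2 : nle b c) : nle a c :=
  ⟨by rw [← h1.1, wedge_assoc, h2.1, h1.1], by rw [← h1.2, ← wedge_assoc, h2.2, h1.2]⟩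

theorem wedge_nle {p q e : S} (hp : nle p e) (hq : nle q e) : nle (p ⋏ q) e :=
  ⟨by rw [wedge_assoc, hq.1], by rw [← wedge_assoc, hp.2]⟩

theorem vee_nle {p q e : S} (hp : nle p e) (hq : nle q e) : nle (p ⋎ q) e :=
  ⟨by rw [sdistrib2, hp.1, hq.1], by rw [sdistrib1, hp.2, hq.2]⟩

theorem sandwich_nle (e u : S) : nle (e ⋏ u ⋏ e) e :=
  ⟨by rw [wedge_assoc _ e, wedge_idem], by rw [← wedge_assoc, ← wedge_assoc, wedge_idem]⟩

theorem sandwich_of_nle {a e : S} (h : nle a e) : e ⋏ a ⋏ e = a := by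
  rw [h.2, h.1]

theorem wedge_eq_zero_of_nle {p a q b : S} (hp : nle p a) (hq : nle q b)
    (h : a ⋏ b = zero) : p ⋏ q = zero := by
  rw [← hp.1, ← hq.2, wedge_assoc, ← wedge_assoc a, h, zero_wedge, wedge_zero]

/-! ### Differences -/

theorem diff_nle (x y : S) : nle (x ∖ y) x := by
  constructor
  · calc (x ∖ y) ⋏ x = (x ∖ y) ⋏ (x ⋏ y ⋏ x ⋎ x ∖ y) := by rw [diff_ax1]
      _ = x ∖ y := by rw [sdistrib1, diff_ax3, wedge_idem, zero_vee]
  · calc x ⋏ (x ∖ y) = (x ⋏ y ⋏ x ⋎ x ∖ y) ⋏ (x ∖ y) := by rw [diff_ax1]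
      _ = x ∖ y := absorb2 _ _

theorem diff_eq_self_of_sandwich_eq_zero {x y : S} (h : x ⋏ y ⋏ x = zero) : x ∖ y = x := by
  simpa only [h, zero_vee] using diff_ax1 x y

theorem diff_eq_zero_of_sandwich_eq_self {x y : S} (h : x ⋏ y ⋏ x = x) : x ∖ y = zero := by
  have h1 := diff_ax1 x y
  have h2 := diff_ax2 x y
  rw [h] at h1 h2
  simpa only [h1, h2] using (absorb2 (x ∖ y) x).symm

theorem zero_diff (y : S) : (zero : S) ∖ y = zero :=
  diff_eq_self_of_sandwich_eq_zero (by rw [zero_wedge, zero_wedge])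

theorem diff_zero (x : S) : x ∖ (zero : S) = x :=
  diff_eq_self_of_sandwich_eq_zero (by rw [wedge_zero, zero_wedge])

theorem diff_wedge_eq_zero (x y : S) : (x ∖ y) ⋏ y = zero := by
  have hsand : (x ∖ y) ⋏ y ⋏ (x ∖ y) = zero := by
    calc (x ∖ y) ⋏ y ⋏ (x ∖ y) = ((x ∖ y) ⋏ x) ⋏ y ⋏ (x ⋏ (x ∖ y)) := by
          rw [(diff_nle x y).1, (diff_nle x y).2]
      _ = (x ∖ y) ⋏ (x ⋏ y ⋏ x) ⋏ (x ∖ y) := by simp only [wedge_assoc]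
      _ = zero := by rw [diff_ax3, zero_wedge]
  exact (orthogonal_of_sandwich_eq_zero hsand).1

theorem vee_diff_of_nle {a e : S} (h : nle a e) : a ⋎ (e ∖ a) = e := by
  simpa only [sandwich_of_nle h] using diff_ax1 e a

theorem wedge_diff_of_nle {a e : S} (h : nle a e) : a ⋏ (e ∖ a) = zero := by
  simpa only [sandwich_of_nle h] using diff_ax2 e a

theorem diff_wedge_of_nle {a e : S} (h : nle a e) : (e ∖ a) ⋏ a = zero := by
  simpa only [sandwich_of_nle h] using diff_ax3 e a

/-! ### Elements below a common bound -/

theorem eq_of_greenL_of_nle {a b e : S} (ha : nle a e) (hb : e ⋏ b = b)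
    (hab : a ⋏ b = a) (hba : b ⋏ a = b) : a = b := by
  set t := (e ∖ a) ⋏ b
  have hta : t ⋏ a = t := by rw [wedge_assoc, hba]
  have hat : a ⋏ t = zero := by rw [← wedge_assoc, wedge_diff_of_nle ha, zero_wedge]
  have ht : t = zero :=
    calc t = t ⋏ a ⋏ t := by rw [hta, wedge_idem]
      _ = zero := by rw [wedge_assoc, hat, wedge_zero]
  calc a = a ⋏ b ⋎ t := by rw [ht, vee_zero, hab]
    _ = b := by rw [← sdistrib2, vee_diff_of_nle ha, hb]

theorem eq_of_greenR_of_nle {a b e : S} (ha : nle a e) (hb : b ⋏ e = b)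
    (hab : a ⋏ b = b) (hba : b ⋏ a = a) : a = b := by
  set t := b ⋏ (e ∖ a)
  have hat : a ⋏ t = t := by rw [← wedge_assoc, hab]
  have hta : t ⋏ a = zero := by rw [wedge_assoc, diff_wedge_of_nle ha, wedge_zero]
  have ht : t = zero :=
    calc t = t ⋏ (a ⋏ t) := by rw [hat, wedge_idem]
      _ = zero := by rw [← wedge_assoc, hta, zero_wedge]
  calc a = b ⋏ a ⋎ t := by rw [ht, vee_zero, hba]
    _ = b := by rw [← sdistrib1, vee_diff_of_nle ha, hb]

theorem wedge_comm_of_nle {p q e : S} (hp : nle p e) (hq : nle q e) : p ⋏ q = q ⋏ p := by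
  have key : ∀ {a b : S}, nle a e → nle b e → a ⋏ b = b ⋏ (a ⋏ b) := fun {a b} ha hb =>
    eq_of_greenL_of_nle (wedge_nle ha hb) (wedge_nle hb (wedge_nle ha hb)).2
      (by simp only [wedge_assoc, wedge_left_idem, wedge_wedge_wedge_idem])
      (by simp only [wedge_assoc, wedge_wedge_wedge_idem])
  refine (eq_of_greenR_of_nle (wedge_nle hq hp) (wedge_nle hp hq).1 ?_ ?_).symm
  · rw [wedge_assoc, wedge_left_idem, ← key hp hq]
  · rw [wedge_assoc, wedge_left_idem, ← key hq hp]

theorem vee_comm_of_nle {p q e : S} (hp : nle p e) (hq : nle q e) : p ⋎ q = q ⋎ p := by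
  refine eq_of_greenL_of_nle (vee_nle hp hq) (vee_nle hq hp).2 ?_ ?_
  · rw [sdistrib2, sdistrib1, absorb1, wedge_idem, wedge_comm_of_nle hp hq, absorb4]
  · rw [sdistrib2, sdistrib1, absorb1, wedge_idem, wedge_comm_of_nle hq hp, absorb4]

/-- The meet is a regular band. -/
theorem wedge_regular (x y z : S) : x ⋏ y ⋏ z ⋏ x = x ⋏ y ⋏ x ⋏ z ⋏ x := by
  set P := x ⋏ y ⋏ z ⋏ x
  set Q := x ⋏ y ⋏ x ⋏ z ⋏ x
  have hP : P ⋎ Q = P := by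
    calc P ⋎ Q = x ⋏ (y ⋎ y ⋏ x) ⋏ z ⋏ x := by
          rw [sdistrib1, sdistrib2, sdistrib2]; simp only [P, Q, wedge_assoc]
      _ = P := by rw [absorb3]
  have hPQ : P ⋏ Q = Q := by simpa only [hP] using absorb2 Q P
  have hPx : nle P x := by simpa only [P, wedge_assoc] using sandwich_nle x (y ⋏ z)
  have hPa : P ⋏ (x ⋏ y ⋏ x) = P := by
    rw [wedge_comm_of_nle hPx (sandwich_nle x y)]
    simp only [P, wedge_assoc, wedge_left_idem, wedge_wedge_wedge_left_idem]
  have hPc : P ⋏ (x ⋏ z ⋏ x) = P := by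
    simp only [P, wedge_assoc, wedge_left_idem, wedge_wedge_wedge_idem]
  have hQ : Q = (x ⋏ y ⋏ x) ⋏ (x ⋏ z ⋏ x) := by
    simp only [Q, wedge_assoc, wedge_left_idem]
  rw [← hPQ, hQ, ← wedge_assoc, hPa, hPc]

theorem wedge_regular_assoc (x y z : S) : x ⋏ (y ⋏ (x ⋏ (z ⋏ x))) = x ⋏ (y ⋏ (z ⋏ x)) := by
  simpa only [wedge_assoc] using (wedge_regular x y z).symm

theorem wedge_regular_assoc_right (x y z w : S) :
    x ⋏ (y ⋏ (x ⋏ (z ⋏ (x ⋏ w)))) = x ⋏ (y ⋏ (z ⋏ (x ⋏ w))) := by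
  simpa only [wedge_assoc] using congrArg (· ⋏ w) (wedge_regular x y z).symm

theorem Drel.vee_eq {x y : S} (h : Drel x y) : x ⋎ y = y ⋏ x := by
  obtain ⟨hx, hy⟩ := h
  have hxyx : x ⋏ (y ⋏ x) = x := by rw [← wedge_assoc]; exact hx
  have hxvyx : x ⋎ (y ⋏ x) = y ⋏ x := by simpa only [hxyx] using absorb4 (y ⋏ x) x
  have hyxvy : (y ⋏ x) ⋎ y = y ⋏ x := by simpa only [hy] using absorb3 (y ⋏ x) y
  have hts : (x ⋎ y) ⋏ (y ⋏ x) ⋏ (x ⋎ y) = y ⋏ x := by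
    rw [sdistrib2 x y, hxyx, wedge_left_idem, hxvyx, sdistrib1, wedge_assoc, wedge_idem, hy,
      hyxvy]
  have hr1 := diff_ax1 (x ⋎ y) (y ⋏ x)
  have hr3 := diff_ax3 (x ⋎ y) (y ⋏ x)
  rw [hts] at hr1 hr3
  have hr : ((x ⋎ y) ∖ (y ⋏ x)) ⋏ (x ⋎ y) = (x ⋎ y) ∖ (y ⋏ x) := (diff_nle _ _).1
  have hrx : ((x ⋎ y) ∖ (y ⋏ x)) ⋏ x = zero := by
    rw [← hr, wedge_assoc, sdistrib2, wedge_idem, hxvyx, hr3]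
  have hry : ((x ⋎ y) ∖ (y ⋏ x)) ⋏ y = zero :=
    calc ((x ⋎ y) ∖ (y ⋏ x)) ⋏ y = ((x ⋎ y) ∖ (y ⋏ x)) ⋏ (y ⋏ x) ⋏ y := by
          rw [wedge_assoc _ (y ⋏ x), hy]
      _ = zero := by rw [hr3, zero_wedge]
  rw [← hr, sdistrib1, hrx, hry, vee_zero, vee_zero] at hr1
  exact hr1.symm

theorem vee_comm_of_orthogonal {x y : S} (h1 : x ⋏ y = zero) (h2 : y ⋏ x = zero) :
    x ⋎ y = y ⋎ x := by
  have hx : nle x (x ⋎ y ⋎ x) :=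
    ⟨by rw [sdistrib1, absorb1, wedge_idem, vee_idem],
      by rw [sdistrib2, sdistrib2, wedge_idem, h2, vee_zero, vee_idem]⟩
  have hy : nle y (x ⋎ y ⋎ x) :=
    ⟨by rw [sdistrib1, sdistrib1, h2, wedge_idem, zero_vee, vee_zero],
      by rw [sdistrib2, sdistrib2, h1, wedge_idem, zero_vee, vee_zero]⟩
  refine eq_of_greenL_of_nle (vee_nle hx hy) (vee_nle hy hx).2 ?_ ?_
  · rw [sdistrib2, sdistrib1, absorb1, h1, wedge_idem, zero_vee]
  · rw [sdistrib2, sdistrib1, absorb1, h2, wedge_idem, zero_vee]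

/-- `x ∖ y` is the complement of `x ⋏ y ⋏ x` below `x`. -/
theorem diff_eq_of_complement {x y z : S} (hz : nle z x) (h1 : z ⋏ (x ⋏ y ⋏ x) = zero)
    (h3 : (x ⋏ y ⋏ x) ⋎ z = x) : x ∖ y = z := by
  have hz' : z ⋏ (x ∖ y) = z :=
    calc z ⋏ (x ∖ y) = z ⋏ (x ⋏ y ⋏ x ⋎ x ∖ y) := by rw [sdistrib1, h1, zero_vee]
      _ = z := by rw [diff_ax1, hz.1]
  have hd' : (x ∖ y) ⋏ z = x ∖ y :=
    calc (x ∖ y) ⋏ z = (x ∖ y) ⋏ (x ⋏ y ⋏ x ⋎ z) := by rw [sdistrib1, diff_ax3, zero_vee]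
      _ = x ∖ y := by rw [h3, (diff_nle x y).1]
  rw [← hd', wedge_comm_of_nle (diff_nle x y) hz, hz']

theorem diff_eq_diff_of_sandwich_eq {x y y' : S} (h : x ⋏ y ⋏ x = x ⋏ y' ⋏ x) :
    x ∖ y = x ∖ y' :=
  diff_eq_of_complement (diff_nle x y') (by rw [h]; exact diff_ax3 x y')
    (by rw [h]; exact diff_ax1 x y')

theorem sandwich_eq_wedge_of_nle {z x : S} (hz : nle z x) (k : S) :
    z ⋏ k ⋏ z = x ⋏ k ⋏ x ⋏ z := by
  calc z ⋏ k ⋏ z = z ⋏ x ⋏ k ⋏ (x ⋏ z) := by rw [hz.1, hz.2]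
    _ = z ⋏ (x ⋏ k ⋏ x ⋏ z) := by simp only [wedge_assoc]
    _ = x ⋏ k ⋏ x ⋏ z := by
        rw [wedge_comm_of_nle hz (wedge_nle (sandwich_nle x k) hz), wedge_assoc, wedge_idem]

theorem diff_eq_wedge_diff_of_nle {x q y : S} (hq : nle q x) : q ∖ y = q ⋏ (x ∖ y) := by
  have hX : nle (x ∖ y) x := diff_nle x y
  have hcomm : q ⋏ (x ∖ y) = (x ∖ y) ⋏ q := wedge_comm_of_nle hq hX
  have hzq : nle (q ⋏ (x ∖ y)) q :=
    ⟨by rw [wedge_assoc, ← hcomm, wedge_left_idem], wedge_left_idem _ _⟩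
  have hdecomp : q ⋏ y ⋏ x ⋎ q ⋏ (x ∖ y) = q := by
    calc q ⋏ y ⋏ x ⋎ q ⋏ (x ∖ y) = q ⋏ (x ⋏ y ⋏ x ⋎ x ∖ y) := by
          rw [sdistrib1]; simp only [← wedge_assoc, hq.1]
      _ = q := by rw [diff_ax1, hq.1]
  have hw : q ⋏ y ⋏ q = q ⋏ y ⋏ x := by
    calc q ⋏ y ⋏ q = q ⋏ y ⋏ x ⋏ q := by rw [wedge_assoc _ x, hq.2]
      _ = q ⋏ y ⋏ x := by simpa only [hdecomp] using absorb1 (q ⋏ y ⋏ x) (q ⋏ (x ∖ y))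
  refine diff_eq_of_complement hzq ?_ (by rw [hw, hdecomp])
  calc q ⋏ (x ∖ y) ⋏ (q ⋏ y ⋏ q) = q ⋏ ((x ∖ y) ⋏ q) ⋏ y ⋏ q := by simp only [wedge_assoc]
    _ = q ⋏ ((x ∖ y) ⋏ y) ⋏ q := by rw [← hcomm, wedge_left_idem, wedge_assoc q]
    _ = zero := by rw [diff_wedge_eq_zero, wedge_zero, zero_wedge]

theorem diff_diff_left (x D k : S) : (x ∖ D) ∖ k = x ∖ (D ⋎ k) := by
  have hX : nle (x ∖ D) x := diff_nle x D
  have hq : nle (x ⋏ k ⋏ x) x := sandwich_nle x k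
  have hZx : nle ((x ∖ D) ∖ k) x := nle_trans (diff_nle _ _) hX
  have hw : x ⋏ (D ⋎ k) ⋏ x = x ⋏ D ⋏ x ⋎ x ⋏ k ⋏ x := by rw [sdistrib1, sdistrib2]
  have hjoin : x ⋏ D ⋏ x ⋎ x ⋏ k ⋏ x = x ⋏ D ⋏ x ⋎ x ⋏ k ⋏ x ⋏ (x ∖ D) := by
    have hsplit : x ⋏ k ⋏ x = x ⋏ k ⋏ x ⋏ (x ⋏ D ⋏ x) ⋎ x ⋏ k ⋏ x ⋏ (x ∖ D) := by
      rw [← sdistrib1, diff_ax1, wedge_assoc _ x x, wedge_idem]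
    conv_lhs => rw [hsplit]
    rw [← vee_assoc, wedge_comm_of_nle hq (sandwich_nle x D), absorb3]
  refine (diff_eq_of_complement hZx ?_ ?_).symm
  · have hD : (x ∖ D) ∖ k ⋏ (x ⋏ D ⋏ x) = zero := by
      calc (x ∖ D) ∖ k ⋏ (x ⋏ D ⋏ x) = (x ∖ D) ∖ k ⋏ D ⋏ x := by
            simp only [← wedge_assoc, hZx.1]
        _ = (x ∖ D) ∖ k ⋏ ((x ∖ D) ⋏ D) ⋏ x := by
            rw [← wedge_assoc _ (x ∖ D), (diff_nle (x ∖ D) k).1]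
        _ = zero := by rw [diff_wedge_eq_zero, wedge_zero, zero_wedge]
    have hk : (x ∖ D) ∖ k ⋏ (x ⋏ k ⋏ x) = zero := by
      calc (x ∖ D) ∖ k ⋏ (x ⋏ k ⋏ x) = (x ∖ D) ∖ k ⋏ k ⋏ x := by
            simp only [← wedge_assoc, hZx.1]
        _ = zero := by rw [diff_wedge_eq_zero, zero_wedge]
    rw [hw, sdistrib1, hD, hk, vee_zero]
  · rw [hw, hjoin, vee_assoc, ← sandwich_eq_wedge_of_nle hX, diff_ax1, diff_ax1]

theorem diff_split (x D k : S) : x ∖ D = (x ⋏ k ⋏ x) ∖ D ⋎ x ∖ (D ⋎ k) := by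
  rw [← diff_diff_left, diff_eq_wedge_diff_of_nle (sandwich_nle x k),
    ← sandwich_eq_wedge_of_nle (diff_nle x D), diff_ax1]

theorem sandwich_diff (x m D : S) : x ⋏ (m ∖ D) ⋏ x = (x ⋏ m ⋏ x) ∖ D := by
  have hdm : ∀ w, (m ∖ D) ⋏ (m ⋏ w) = (m ∖ D) ⋏ w := fun w => by
    rw [← wedge_assoc, (diff_nle m D).1]
  have hmd : ∀ w, m ⋏ ((m ∖ D) ⋏ w) = (m ∖ D) ⋏ w := fun w => by
    rw [← wedge_assoc, (diff_nle m D).2]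
  have hdD : ∀ w, (m ∖ D) ⋏ (D ⋏ w) = zero := fun w => by
    rw [← wedge_assoc, diff_wedge_eq_zero, zero_wedge]
  have hzX : x ⋏ (m ∖ D) ⋏ x ⋏ (x ⋏ m ⋏ x) = x ⋏ (m ∖ D) ⋏ x := by
    simp only [wedge_assoc, wedge_left_idem, wedge_regular_assoc, hdm]
  have hXDX : x ⋏ m ⋏ x ⋏ D ⋏ (x ⋏ m ⋏ x) = x ⋏ (m ⋏ D ⋏ m) ⋏ x := by
    simp only [wedge_assoc, wedge_regular_assoc_right]
    rw [← wedge_assoc m D, wedge_regular_assoc]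
    simp only [wedge_assoc]
  refine (diff_eq_of_complement ⟨hzX, ?_⟩ ?_ ?_).symm
  · simp only [wedge_assoc, wedge_left_idem, wedge_regular_assoc, hmd]
  · calc x ⋏ (m ∖ D) ⋏ x ⋏ (x ⋏ m ⋏ x ⋏ D ⋏ (x ⋏ m ⋏ x))
        = x ⋏ (m ∖ D) ⋏ x ⋏ (x ⋏ m ⋏ x) ⋏ D ⋏ (x ⋏ m ⋏ x) := by simp only [wedge_assoc]
      _ = zero := by
        rw [hzX]; simp only [wedge_assoc, wedge_regular_assoc_right, hdD, wedge_zero]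
  · rw [hXDX, ← sdistrib2, ← sdistrib1, diff_ax1]

theorem vee_diff_vee_of_orthogonal {a a' b b' : S}
    (hab' : a ⋏ b' = zero) (hb'a : b' ⋏ a = zero)
    (ha'b : a' ⋏ b = zero) (hba' : b ⋏ a' = zero)
    (haa' : a ⋏ a' = zero) (ha'a : a' ⋏ a = zero) :
    (a ⋎ a') ∖ (b ⋎ b') = a ∖ b ⋎ a' ∖ b' := by
  have hXY : (a ⋎ a') ⋏ (b ⋎ b') = a ⋏ b ⋎ a' ⋏ b' := by
    rw [sdistrib2, sdistrib1, sdistrib1, hab', ha'b, vee_zero, zero_vee]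
  have hW : (a ⋎ a') ⋏ (b ⋎ b') ⋏ (a ⋎ a') = a ⋏ b ⋏ a ⋎ a' ⋏ b' ⋏ a' := by
    rw [hXY, sdistrib2,
      sdistrib1, sdistrib1, wedge_assoc a b a', hba', wedge_zero, vee_zero,
      wedge_assoc a' b' a, hb'a, wedge_zero, zero_vee]
  have hd := diff_nle a b
  have hd' := diff_nle a' b'
  refine diff_eq_of_complement ⟨?_, ?_⟩ ?_ ?_
  · rw [sdistrib2, sdistrib1, sdistrib1, hd.1, wedge_eq_zero_of_nle hd (nle_refl a') haa',
      wedge_eq_zero_of_nle hd' (nle_refl a) ha'a, hd'.1, vee_zero, zero_vee]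
  · rw [sdistrib1, sdistrib2, sdistrib2, hd.2, wedge_eq_zero_of_nle (nle_refl a') hd ha'a,
      wedge_eq_zero_of_nle (nle_refl a) hd' haa', hd'.2, vee_zero, zero_vee]
  · rw [hW, sdistrib1, sdistrib2, sdistrib2, diff_ax3,
      wedge_eq_zero_of_nle hd' (sandwich_nle a b) ha'a,
      wedge_eq_zero_of_nle hd (sandwich_nle a' b') haa', diff_ax3, vee_zero, zero_vee]
  · have hcomm : a' ⋏ b' ⋏ a' ⋎ a ∖ b = a ∖ b ⋎ a' ⋏ b' ⋏ a' :=
      vee_comm_of_orthogonal (wedge_eq_zero_of_nle (sandwich_nle a' b') hd ha'a)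
        (wedge_eq_zero_of_nle hd (sandwich_nle a' b') haa')
    calc (a ⋎ a') ⋏ (b ⋎ b') ⋏ (a ⋎ a') ⋎ (a ∖ b ⋎ a' ∖ b')
        = a ⋏ b ⋏ a ⋎ ((a' ⋏ b' ⋏ a' ⋎ a ∖ b) ⋎ a' ∖ b') := by
          rw [hW]; simp only [vee_assoc]
      _ = a ⋎ a' := by
          rw [hcomm, ← vee_assoc, ← vee_assoc, diff_ax1, vee_assoc, diff_ax1]

/-! ### Finite meets and joins -/

/-- `meetList [a₁, …, aₖ] = a₁ ⋏ (⋯ ⋏ aₖ)`; the empty meet is the junk value `zero`. -/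
def meetList : List S → S
  | [] => zero
  | [a] => a
  | a :: l => a ⋏ meetList l

def joinList : List S → S
  | [] => zero
  | a :: l => a ⋎ joinList l

@[simp] theorem joinList_nil : joinList ([] : List S) = zero := rfl

@[simp] theorem joinList_cons (a : S) (l : List S) : joinList (a :: l) = a ⋎ joinList l := rfl

@[simp] theorem meetList_singleton (a : S) : meetList [a] = a := rfl

theorem meetList_cons (a : S) {l : List S} (h : l ≠ []) : meetList (a :: l) = a ⋏ meetList l := by
  cases l with
  | nil => exact absurd rfl h
  | cons b m => rfl

theorem meetList_append {l₁ l₂ : List S} (h₁ : l₁ ≠ []) (h₂ : l₂ ≠ []) :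
    meetList (l₁ ++ l₂) = meetList l₁ ⋏ meetList l₂ := by
  induction l₁ with
  | nil => exact absurd rfl h₁
  | cons a l ih =>
    rcases eq_or_ne l [] with rfl | hl
    · exact meetList_cons a h₂
    · rw [List.cons_append, meetList_cons a (by simp [hl]), ih hl, meetList_cons a hl, wedge_assoc]

theorem joinList_append (l₁ l₂ : List S) : joinList (l₁ ++ l₂) = joinList l₁ ⋎ joinList l₂ := by
  induction l₁ with
  | nil => rw [List.nil_append, joinList_nil, zero_vee]
  | cons a l ih => rw [List.cons_append, joinList_cons, joinList_cons, ih, vee_assoc]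

theorem meetList_eq_zero {l : List S} (h : zero ∈ l) : meetList l = zero := by
  induction l with
  | nil => simp at h
  | cons a l ih =>
    rcases eq_or_ne l [] with rfl | hl
    · simpa [eq_comm] using h
    · rw [meetList_cons a hl]
      rcases List.mem_cons.mp h with h0 | h0
      · rw [← h0, zero_wedge]
      · rw [ih h0, wedge_zero]

theorem joinList_eq_zero {l : List S} (h : ∀ a ∈ l, a = zero) : joinList l = zero := by
  induction l with
  | nil => rfl
  | cons a l ih => rw [joinList_cons, h a (by simp), ih (fun c hc => h c (by simp [hc])), vee_zero]

theorem eq_zero_of_joinList_eq_zero {l : List S} (h : joinList l = zero) :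
    ∀ a ∈ l, a = zero := by
  induction l with
  | nil => simp
  | cons a l ih =>
    obtain ⟨ha, hl⟩ := eq_zero_of_vee_eq_zero h
    simpa [ha] using ih hl

theorem wedge_joinList (x : S) (l : List S) : x ⋏ joinList l = joinList (l.map (x ⋏ ·)) := by
  induction l with
  | nil => exact wedge_zero x
  | cons a l ih => simp only [joinList_cons, List.map_cons, sdistrib1, ih]

theorem joinList_wedge (x : S) (l : List S) : joinList l ⋏ x = joinList (l.map (· ⋏ x)) := by
  induction l with
  | nil => exact zero_wedge x
  | cons a l ih => simp only [joinList_cons, List.map_cons, sdistrib2, ih]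

theorem wedge_joinList_eq_zero {l : List S} {x : S} (h : ∀ a ∈ l, x ⋏ a = zero) :
    x ⋏ joinList l = zero := by
  rw [wedge_joinList]
  exact joinList_eq_zero (by simpa using h)

theorem joinList_wedge_eq_zero {l : List S} {x : S} (h : ∀ a ∈ l, a ⋏ x = zero) :
    joinList l ⋏ x = zero := by
  rw [joinList_wedge]
  exact joinList_eq_zero (by simpa using h)

theorem sandwich_joinList (e : S) (l : List S) :
    e ⋏ joinList l ⋏ e = joinList (l.map (fun a => e ⋏ a ⋏ e)) := by
  rw [wedge_joinList, joinList_wedge, List.map_map]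
  rfl

theorem sandwich_meetList (e : S) {l : List S} (hl : l ≠ []) :
    e ⋏ meetList l ⋏ e = meetList (l.map (fun a => e ⋏ a ⋏ e)) := by
  induction l with
  | nil => exact absurd rfl hl
  | cons a l ih =>
    rcases eq_or_ne l [] with rfl | hl'
    · rfl
    · rw [List.map_cons, meetList_cons a hl', meetList_cons _ (by simpa using hl'), ← ih hl',
        ← wedge_assoc, wedge_regular]
      simp only [wedge_assoc, wedge_left_idem]

theorem meetList_sandwich_of_mem {l : List S} {w : S} (hw : w ∈ l) :
    meetList l ⋏ w ⋏ meetList l = meetList l := by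
  induction l with
  | nil => simp at hw
  | cons a l ih =>
    rcases eq_or_ne l [] with rfl | hl
    · rw [List.mem_singleton.mp hw, meetList_singleton, wedge_idem, wedge_idem]
    rw [meetList_cons a hl]
    rcases List.mem_cons.mp hw with rfl | hwl
    · simp only [wedge_assoc, wedge_left_idem, wedge_wedge_wedge_idem]
    · calc a ⋏ meetList l ⋏ w ⋏ (a ⋏ meetList l)
          = a ⋏ (meetList l ⋏ w ⋏ a ⋏ meetList l) := by simp only [wedge_assoc]
        _ = a ⋏ (meetList l ⋏ w ⋏ meetList l ⋏ a ⋏ meetList l) := by rw [wedge_regular]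
        _ = a ⋏ meetList l := by
          rw [ih hwl]; simp only [wedge_assoc, wedge_wedge_wedge_idem]

theorem meetList_perm {l l' : List S} {e : S} (hp : l.Perm l') (hle : ∀ a ∈ l, nle a e) :
    meetList l = meetList l' := by
  induction hp with
  | nil => rfl
  | @cons a l₁ l₂ h ih =>
    rcases eq_or_ne l₁ [] with rfl | hl₁
    · rw [h.nil_eq]
    · have hl₂ : l₂ ≠ [] := fun h2 => hl₁ (h2 ▸ h).eq_nil
      rw [meetList_cons a hl₁, meetList_cons a hl₂, ih (fun c hc => hle c (by simp [hc]))]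
  | swap x y l =>
    have hxy := wedge_comm_of_nle (hle y (by simp)) (hle x (by simp))
    rcases eq_or_ne l [] with rfl | hl
    · exact hxy
    · rw [meetList_cons y (by simp), meetList_cons x hl, meetList_cons x (by simp),
        meetList_cons y hl, ← wedge_assoc, ← wedge_assoc, hxy]
  | trans h1 _ ih1 ih2 => rw [ih1 hle, ih2 (fun c hc => hle c (h1.mem_iff.mpr hc))]

theorem sandwich_meetList_perm (x : S) {l l' : List S} (hp : l.Perm l') (hl : l ≠ []) :
    x ⋏ meetList l ⋏ x = x ⋏ meetList l' ⋏ x := by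
  rw [sandwich_meetList x hl, sandwich_meetList x (fun h => hl (h ▸ hp).eq_nil)]
  refine meetList_perm (e := x) (hp.map _) ?_
  simp only [List.mem_map]
  rintro _ ⟨a, -, rfl⟩
  exact sandwich_nle x a

theorem joinList_perm {l l' : List S} (hp : l.Perm l')
    (hc : ∀ a ∈ l, ∀ b ∈ l, a ⋎ b = b ⋎ a) : joinList l = joinList l' := by
  induction hp with
  | nil => rfl
  | cons a _ ih =>
    rw [joinList_cons, joinList_cons,
      ih (fun c hc' d hd' => hc c (by simp [hc']) d (by simp [hd']))]
  | swap x y l =>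
    rw [joinList_cons, joinList_cons, joinList_cons, joinList_cons, ← vee_assoc, ← vee_assoc,
      hc y (by simp) x (by simp)]
  | trans h1 _ ih1 ih2 =>
    rw [ih1 hc, ih2 (fun c hc' d hd' => hc c (h1.mem_iff.mpr hc') d (h1.mem_iff.mpr hd'))]

theorem sandwich_joinList_perm (x : S) {l l' : List S} (hp : l.Perm l') :
    x ⋏ joinList l ⋏ x = x ⋏ joinList l' ⋏ x := by
  rw [sandwich_joinList, sandwich_joinList]
  refine joinList_perm (hp.map _) ?_
  simp only [List.mem_map]
  rintro _ ⟨a, -, rfl⟩ _ ⟨b, -, rfl⟩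
  exact vee_comm_of_nle (sandwich_nle x a) (sandwich_nle x b)

theorem joinList_map_eq_single {α : Type*} {f : α → S} {L : List α} {a : α} (hL : L.Nodup)
    (ha : a ∈ L) (h : ∀ b ∈ L, b ≠ a → f b = zero) : joinList (L.map f) = f a := by
  induction L with
  | nil => simp at ha
  | cons b L ih =>
    obtain ⟨hb, hL'⟩ := List.nodup_cons.mp hL
    rw [List.map_cons, joinList_cons]
    rcases List.mem_cons.mp ha with rfl | ha'
    · rw [joinList_eq_zero, vee_zero]
      simp only [List.mem_map]
      rintro _ ⟨c, hc, rfl⟩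
      exact h c (by simp [hc]) (fun hca => hb (hca ▸ hc))
    · rw [h b (by simp) (fun hba => hb (hba ▸ ha')), zero_vee]
      exact ih hL' ha' (fun c hc => h c (by simp [hc]))

/-! ### Joins of orthogonal families -/

section Families

variable {α : Type*}

/-- The join of `f` over `s` in the order of `s.toList`; as `⋎` is not commutative, the lemmas
below assume that the values of `f` commute. -/
noncomputable def joinOver (s : Finset α) (f : α → S) : S := joinList (s.toList.map f)

theorem joinOver_singleton (a : α) (f : α → S) : joinOver {a} f = f a := by
  rw [joinOver, Finset.toList_singleton, List.map_singleton, joinList_cons, joinList_nil, vee_zero]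

theorem joinOver_congr {s : Finset α} {f g : α → S} (h : ∀ a ∈ s, f a = g a) :
    joinOver s f = joinOver s g := by
  rw [joinOver, joinOver, List.map_congr_left (by simpa using h)]

theorem joinOver_eq_zero {s : Finset α} {f : α → S} (h : ∀ a ∈ s, f a = zero) :
    joinOver s f = zero :=
  joinList_eq_zero (by simpa using h)

theorem joinOver_perm {s : Finset α} {l : List α} (f : α → S) (hp : s.toList.Perm l)
    (hf : ∀ a b, f a ⋎ f b = f b ⋎ f a) : joinOver s f = joinList (l.map f) := by
  refine joinList_perm (hp.map f) ?_
  simp only [List.mem_map]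
  rintro _ ⟨a, -, rfl⟩ _ ⟨b, -, rfl⟩
  exact hf a b

def Orthogonal (f g : α → S) : Prop := ∀ a b, a ≠ b → f a ⋏ g b = zero

namespace Orthogonal

variable {f g : α → S} {L : List α} {a : α}

theorem wedge_joinList (h : Orthogonal f g) (ha : a ∉ L) : f a ⋏ joinList (L.map g) = zero :=
  wedge_joinList_eq_zero (by simpa using fun b hb => h a b (fun hab => ha (hab ▸ hb)))

theorem joinList_wedge (h : Orthogonal f g) (ha : a ∉ L) : joinList (L.map f) ⋏ g a = zero :=
  joinList_wedge_eq_zero (by simpa using fun b hb => h b a (fun hba => ha (hba ▸ hb)))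

theorem joinList_map_wedge (h : Orthogonal f g) (hL : L.Nodup) :
    joinList (L.map f) ⋏ joinList (L.map g) = joinList (L.map fun a => f a ⋏ g a) := by
  induction L with
  | nil => exact wedge_zero _
  | cons a L ih =>
    obtain ⟨ha, hL'⟩ := List.nodup_cons.mp hL
    simp only [List.map_cons, joinList_cons]
    rw [sdistrib2, sdistrib1, sdistrib1, h.wedge_joinList (by simpa using ha),
      h.joinList_wedge (by simpa using ha), vee_zero, zero_vee, ih hL']

theorem joinList_map_vee (hfg : Orthogonal f g) (hgf : Orthogonal g f) (hL : L.Nodup) :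
    joinList (L.map f) ⋎ joinList (L.map g) = joinList (L.map fun a => f a ⋎ g a) := by
  induction L with
  | nil => exact vee_zero _
  | cons a L ih =>
    obtain ⟨ha, hL'⟩ := List.nodup_cons.mp hL
    have ha' : a ∉ L := by simpa using ha
    simp only [List.map_cons, joinList_cons]
    rw [vee_assoc, ← vee_assoc (joinList _),
      vee_comm_of_orthogonal (hfg.joinList_wedge ha') (hgf.wedge_joinList ha'), vee_assoc,
      ← vee_assoc, ih hL']

theorem joinList_map_diff (hfg : Orthogonal f g) (hgf : Orthogonal g f) (hff : Orthogonal f f)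
    (hL : L.Nodup) :
    joinList (L.map f) ∖ joinList (L.map g) = joinList (L.map fun a => f a ∖ g a) := by
  induction L with
  | nil => exact zero_diff _
  | cons a L ih =>
    obtain ⟨ha, hL'⟩ := List.nodup_cons.mp hL
    have ha' : a ∉ L := by simpa using ha
    simp only [List.map_cons, joinList_cons]
    rw [vee_diff_vee_of_orthogonal (hfg.wedge_joinList ha') (hgf.joinList_wedge ha')
      (hfg.joinList_wedge ha') (hgf.wedge_joinList ha') (hff.wedge_joinList ha')
      (hff.joinList_wedge ha'), ih hL']

end Orthogonal

variable [DecidableEq α]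

theorem joinOver_union {s t : Finset α} {f : α → S} (hf : ∀ a b, f a ⋎ f b = f b ⋎ f a)
    (hst : Disjoint s t) : joinOver (s ∪ t) f = joinOver s f ⋎ joinOver t f := by
  have hp : (s ∪ t).toList.Perm (s.toList ++ t.toList) := by
    refine (List.perm_ext_iff_of_nodup (Finset.nodup_toList _) ?_).mpr (by simp)
    exact (Finset.nodup_toList s).append (Finset.nodup_toList t) fun a ha hb =>
      Finset.disjoint_left.mp hst (Finset.mem_toList.mp ha) (Finset.mem_toList.mp hb)
  rw [joinOver_perm f hp hf, List.map_append, joinList_append, joinOver, joinOver]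

theorem joinOver_image {β : Type*} {s : Finset β} {g : β → α} {f : α → S}
    (hf : ∀ a b, f a ⋎ f b = f b ⋎ f a) (hg : Set.InjOn g s) :
    joinOver (s.image g) f = joinOver s (f ∘ g) := by
  have hp : (s.image g).toList.Perm (s.toList.map g) := by
    refine (List.perm_ext_iff_of_nodup (Finset.nodup_toList _) ?_).mpr (by simp)
    exact (Finset.nodup_toList s).map_on fun a ha b hb => hg (by simpa using ha) (by simpa using hb)
  rw [joinOver_perm f hp hf, List.map_map, joinOver]

theorem joinOver_powerset_insert {s : Finset α} {a : α} (ha : a ∉ s) {f : Finset α → S}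
    (hf : ∀ B C, f B ⋎ f C = f C ⋎ f B) :
    joinOver (insert a s).powerset f =
      joinOver s.powerset (fun B => f (insert a B)) ⋎ joinOver s.powerset f := by
  have hdisj : Disjoint (s.powerset.image (insert a)) s.powerset := by
    refine Finset.disjoint_left.mpr fun C hC hC' => ha ?_
    obtain ⟨B, -, rfl⟩ := Finset.mem_image.mp hC
    exact Finset.mem_powerset.mp hC' (Finset.mem_insert_self a B)
  rw [Finset.powerset_insert, Finset.union_comm, joinOver_union hf hdisj,
    joinOver_image hf (Finset.injOn_insert_powerset ha)]
  rfl

theorem joinOver_filter {s : Finset α} {f : α → S} (p : α → Prop) [DecidablePred p]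
    (hf : ∀ a b, f a ⋎ f b = f b ⋎ f a) :
    joinOver s (fun a => if p a then f a else zero) = joinOver (s.filter p) f := by
  have hf' : ∀ a b, (if p a then f a else zero) ⋎ (if p b then f b else zero) =
      (if p b then f b else zero) ⋎ (if p a then f a else zero) := by
    intro a b
    split_ifs <;> simp only [hf, zero_vee, vee_zero]
  conv_lhs => rw [← Finset.filter_union_filter_not_eq p s]
  rw [joinOver_union hf' (Finset.disjoint_filter_filter_not s s p),
    joinOver_eq_zero (s := s.filter (¬ p ·)) (by simp +contextual), vee_zero]
  exact joinOver_congr (by simp +contextual)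

end Families

/-! ### Terms in a family of generators -/

section Generators

variable {ι : Type*} (v : ι → S)

noncomputable def meetOf (A : Finset ι) : S := meetList (A.toList.map v)

noncomputable def joinOf (A : Finset ι) : S := joinList (A.toList.map v)

variable {v}

theorem meetOf_singleton (i : ι) : meetOf v {i} = v i := by
  simp [meetOf]

theorem joinOf_empty : joinOf v (∅ : Finset ι) = zero := by
  simp [joinOf]

theorem meetOf_sandwich_of_mem {A : Finset ι} {i : ι} (hi : i ∈ A) :
    meetOf v A ⋏ v i ⋏ meetOf v A = meetOf v A :=
  meetList_sandwich_of_mem (List.mem_map_of_mem (Finset.mem_toList.mpr hi))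

variable [DecidableEq ι]

theorem sandwich_meetOf_insert {A : Finset ι} {i k : ι} (hi : i ∈ A) (hk : k ∉ A) :
    v i ⋏ meetOf v (insert k A) ⋏ v i =
      (v i ⋏ meetOf v A ⋏ v i) ⋏ v k ⋏ (v i ⋏ meetOf v A ⋏ v i) := by
  set X := v i ⋏ meetOf v A ⋏ v i
  have hne : A.toList.map v ≠ [] := by simpa using Finset.ne_empty_of_mem hi
  have hX : nle X (v i) := sandwich_nle _ _
  have hLHS : v i ⋏ meetOf v (insert k A) ⋏ v i = X ⋏ (v i ⋏ v k ⋏ v i) := by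
    rw [meetOf, sandwich_meetList_perm _ (Finset.map_toList_insert_perm v hk) (by simp),
      sandwich_meetList _ (by simp), List.map_append,
      meetList_append (by simpa using hne) (by simp), ← sandwich_meetList _ hne]
    rfl
  calc v i ⋏ meetOf v (insert k A) ⋏ v i = X ⋏ (v i ⋏ v k ⋏ v i) := hLHS
    _ = X ⋏ (X ⋏ (v i ⋏ v k ⋏ v i)) := by rw [wedge_left_idem]
    _ = X ⋏ (v i ⋏ v k ⋏ v i ⋏ X) := by rw [wedge_comm_of_nle hX (sandwich_nle _ _)]
    _ = X ⋏ v i ⋏ v k ⋏ (v i ⋏ X) := by simp only [wedge_assoc]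
    _ = X ⋏ v k ⋏ X := by rw [hX.1, hX.2]

theorem diff_joinOf_insert (x : S) {C : Finset ι} {k : ι} (hk : k ∉ C) :
    x ∖ joinOf v (insert k C) = x ∖ (joinOf v C ⋎ v k) := by
  refine diff_eq_diff_of_sandwich_eq ?_
  rw [joinOf, sandwich_joinList_perm x (Finset.map_toList_insert_perm v hk), joinList_append,
    joinOf, joinList_cons, joinList_nil, vee_zero]

end Generators

section AtomTerms

variable {ι : Type*} [Fintype ι] [DecidableEq ι] (v : ι → S)

noncomputable def selector (A : Finset ι) : S := meetOf v A ∖ joinOf v Aᶜ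

/-- In the free algebra on `v` these are the atoms. -/
noncomputable def atomTerm (A : Finset ι) (a b : ι) : S := v a ⋏ selector v A ⋏ v b

variable {v} {A B : Finset ι}

theorem selector_sandwich_of_mem {i : ι} (hi : i ∈ A) :
    selector v A ⋏ v i ⋏ selector v A = selector v A := by
  have hs : nle (selector v A) (meetOf v A) := diff_nle _ _
  calc selector v A ⋏ v i ⋏ selector v A
      = selector v A ⋏ meetOf v A ⋏ v i ⋏ (meetOf v A ⋏ selector v A) := by rw [hs.1, hs.2]
    _ = selector v A ⋏ (meetOf v A ⋏ v i ⋏ meetOf v A) ⋏ selector v A := by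
        simp only [wedge_assoc]
    _ = selector v A := by rw [meetOf_sandwich_of_mem hi, hs.1, wedge_idem]

theorem selector_sandwich_of_notMem {j : ι} (hj : j ∉ A) :
    selector v A ⋏ v j ⋏ selector v A = zero := by
  have h : selector v A ⋏ joinOf v Aᶜ ⋏ selector v A = zero := by
    rw [selector, diff_wedge_eq_zero, zero_wedge]
  rw [joinOf, sandwich_joinList, List.map_map] at h
  exact eq_zero_of_joinList_eq_zero h _
    (List.mem_map_of_mem (Finset.mem_toList.mpr (Finset.mem_compl.mpr hj)))

theorem atomTerm_wedge_atomTerm {a b c d : ι} (hb : b ∈ A) (hc : c ∈ A) :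
    atomTerm v A a b ⋏ atomTerm v A c d = atomTerm v A a d := by
  calc atomTerm v A a b ⋏ atomTerm v A c d
      = v a ⋏ (selector v A ⋏ v b ⋏ v c ⋏ selector v A) ⋏ v d := by
        simp only [atomTerm, wedge_assoc]
    _ = atomTerm v A a d := by
        rw [wedge_regular, selector_sandwich_of_mem hb, selector_sandwich_of_mem hc, atomTerm]

theorem drel_atomTerm {a b c d : ι} (ha : a ∈ A) (hb : b ∈ A) (hc : c ∈ A) (hd : d ∈ A) :
    Drel (atomTerm v A a b) (atomTerm v A c d) :=
  ⟨by rw [atomTerm_wedge_atomTerm hb hc, atomTerm_wedge_atomTerm hd ha],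
    by rw [atomTerm_wedge_atomTerm hd ha, atomTerm_wedge_atomTerm hb hc]⟩

theorem atomTerm_vee_atomTerm {a b c d : ι} (ha : a ∈ A) (hb : b ∈ A) (hc : c ∈ A)
    (hd : d ∈ A) : atomTerm v A a b ⋎ atomTerm v A c d = atomTerm v A c b := by
  rw [(drel_atomTerm ha hb hc hd).vee_eq, atomTerm_wedge_atomTerm hd ha]

theorem atomTerm_diff_atomTerm {a b c d : ι} (ha : a ∈ A) (hb : b ∈ A) (hc : c ∈ A)
    (hd : d ∈ A) : atomTerm v A a b ∖ atomTerm v A c d = zero :=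
  diff_eq_zero_of_sandwich_eq_self (drel_atomTerm ha hb hc hd).1

theorem atomTerm_sandwich_of_notMem {c d j : ι} (hj : j ∉ B) :
    atomTerm v B c d ⋏ v j ⋏ atomTerm v B c d = zero := by
  have h : selector v B ⋏ meetList [v d, v j, v c] ⋏ selector v B = zero := by
    rw [sandwich_meetList _ (by simp)]
    exact meetList_eq_zero (by simp [selector_sandwich_of_notMem hj])
  calc atomTerm v B c d ⋏ v j ⋏ atomTerm v B c d
      = v c ⋏ (selector v B ⋏ meetList [v d, v j, v c] ⋏ selector v B) ⋏ v d := by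
        simp only [atomTerm, meetList, wedge_assoc]
    _ = zero := by rw [h, wedge_zero, zero_wedge]

theorem atomTerm_sandwich_atomTerm_of_mem_of_notMem {a b c d j : ι} (hjA : j ∈ A) (hjB : j ∉ B) :
    atomTerm v B c d ⋏ atomTerm v A a b ⋏ atomTerm v B c d = zero := by
  have h : atomTerm v A a b = meetList [v a, selector v A, v j, selector v A, v b] := by
    conv_lhs => rw [atomTerm, ← selector_sandwich_of_mem hjA]
    simp only [meetList, wedge_assoc]
  rw [h, sandwich_meetList _ (by simp)]
  exact meetList_eq_zero (by simp [atomTerm_sandwich_of_notMem hjB])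

theorem atomTerm_wedge_atomTerm_of_ne {a b c d : ι} (hAB : A ≠ B) :
    atomTerm v A a b ⋏ atomTerm v B c d = zero := by
  by_cases hsub : A ⊆ B
  · obtain ⟨j, hjB, hjA⟩ := Finset.exists_of_ssubset (Finset.ssubset_iff_subset_ne.mpr ⟨hsub, hAB⟩)
    exact (orthogonal_of_sandwich_eq_zero
      (atomTerm_sandwich_atomTerm_of_mem_of_notMem (a := c) (b := d) (c := a) (d := b) hjB hjA)).1
  · obtain ⟨j, hjA, hjB⟩ := Finset.not_subset.mp hsub
    exact (orthogonal_of_sandwich_eq_zero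
      (atomTerm_sandwich_atomTerm_of_mem_of_notMem (a := a) (b := b) (c := c) (d := d) hjA hjB)).2

theorem atomTerm_self_vee_comm (C C' : Finset ι) (i : ι) :
    atomTerm v C i i ⋎ atomTerm v C' i i = atomTerm v C' i i ⋎ atomTerm v C i i := by
  rcases eq_or_ne C C' with rfl | h
  · rfl
  · exact vee_comm_of_orthogonal (atomTerm_wedge_atomTerm_of_ne h)
      (atomTerm_wedge_atomTerm_of_ne h.symm)

end AtomTerms

section PartitionOfUnity

variable {ι : Type*} [Fintype ι] [DecidableEq ι] {v : ι → S} {i : ι}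

/-- Deciding, one generator `k ∈ R` at a time, whether `v k` is met or excluded. -/
theorem sandwich_meetOf_diff_eq_joinOver {A : Finset ι} (R : Finset ι) (hi : i ∈ A)
    (hAR : Disjoint A R) :
    (v i ⋏ meetOf v A ⋏ v i) ∖ joinOf v (A ∪ R)ᶜ =
      joinOver R.powerset (fun B => atomTerm v (A ∪ B) i i) := by
  induction R using Finset.induction_on generalizing A with
  | empty =>
    rw [Finset.union_empty, ← sandwich_diff, Finset.powerset_empty, joinOver_singleton,
      Finset.union_empty]
    rfl
  | @insert k R hkR ih =>
    have hkA : k ∉ A := Finset.disjoint_right.mp hAR (Finset.mem_insert_self k R)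
    have hAR' : Disjoint A R := hAR.mono_right (Finset.subset_insert k R)
    have hkAR : Disjoint (insert k A) R := Finset.disjoint_insert_left.mpr ⟨hkR, hAR'⟩
    have hcomm : ∀ B B' : Finset ι, atomTerm v (A ∪ B) i i ⋎ atomTerm v (A ∪ B') i i =
        atomTerm v (A ∪ B') i i ⋎ atomTerm v (A ∪ B) i i := fun B B' =>
      atomTerm_self_vee_comm _ _ i
    have hcompl : insert k (A ∪ insert k R)ᶜ = (A ∪ R)ᶜ := by
      ext j
      by_cases hj : j = k <;> simp [hj, hkA, hkR]
    rw [joinOver_powerset_insert hkR hcomm, diff_split _ _ (v k), ← sandwich_meetOf_insert hi hkA,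
      ← diff_joinOf_insert _ (by simp), hcompl, ← ih hi hAR',
      show A ∪ insert k R = insert k A ∪ R by rw [Finset.union_insert, Finset.insert_union],
      ih (Finset.mem_insert_of_mem hi) hkAR]
    congr 1
    exact joinOver_congr fun B _ => by rw [Finset.union_insert, Finset.insert_union]

theorem joinOver_atomTerm_self (v : ι → S) (i : ι) :
    joinOver Finset.univ (fun C => if i ∈ C then atomTerm v C i i else zero) = v i := by
  have h := sandwich_meetOf_diff_eq_joinOver (v := v) {i}ᶜ (Finset.mem_singleton_self i)
    disjoint_compl_right
  rw [meetOf_singleton, wedge_idem, wedge_idem, Finset.union_compl, Finset.compl_univ,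
    joinOf_empty, diff_zero] at h
  have himage : ({i}ᶜ : Finset ι).powerset.image (insert i) = Finset.univ.filter (i ∈ ·) := by
    ext C
    simp only [Finset.mem_image, Finset.mem_powerset, Finset.mem_filter, Finset.mem_univ,
      true_and]
    refine ⟨fun ⟨B, _, hB⟩ => hB ▸ Finset.mem_insert_self i B, fun hi => ⟨C.erase i, ?_, ?_⟩⟩
    · intro j hj
      simpa using Finset.ne_of_mem_erase hj
    · exact Finset.insert_erase hi
  rw [h, joinOver_filter _ (fun C C' => atomTerm_self_vee_comm C C' i), ← himage,
    joinOver_image (fun C C' => atomTerm_self_vee_comm C C' i)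
      (Finset.injOn_insert_powerset (by simp))]
  exact joinOver_congr fun B _ => by rw [Function.comp_apply, Finset.insert_eq]

end PartitionOfUnity

end

section Homomorphisms

variable {S T : Type u} [SBA S] [SBA T] {φ : S → T}

theorem isHom_id : IsHom (id : S → S) :=
  ⟨fun _ _ => rfl, fun _ _ => rfl, fun _ _ => rfl, rfl⟩

theorem IsHom.comp {U : Type u} [SBA U] {ψ : T → U} (hψ : IsHom ψ) (hφ : IsHom φ) :
    IsHom (ψ ∘ φ) :=
  ⟨fun a b => by simp only [Function.comp_apply, hφ.1, hψ.1],
    fun a b => by simp only [Function.comp_apply, hφ.2.1, hψ.2.1],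
    fun a b => by simp only [Function.comp_apply, hφ.2.2.1, hψ.2.2.1],
    by simp only [Function.comp_apply, hφ.2.2.2, hψ.2.2.2]⟩

theorem Generates.hom_ext {X : Set S} (hX : Generates X) {f g : S → T} (hf : IsHom f)
    (hg : IsHom g) (h : ∀ x ∈ X, f x = g x) : f = g := by
  have huniv := hX {s | f s = g s} h (show f zero = g zero by rw [hf.2.2.2, hg.2.2.2])
    fun a b (ha : f a = g a) (hb : f b = g b) =>
      ⟨show f (a ⋏ b) = g (a ⋏ b) by rw [hf.1, hg.1, ha, hb],
        show f (a ⋎ b) = g (a ⋎ b) by rw [hf.2.1, hg.2.1, ha, hb],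
        show f (a ∖ b) = g (a ∖ b) by rw [hf.2.2.1, hg.2.2.1, ha, hb]⟩
  exact funext fun s => (Set.eq_univ_iff_forall.mp huniv s : _)

namespace IsHom

variable (hφ : IsHom φ)
include hφ

theorem map_joinList (l : List S) : φ (joinList l) = joinList (l.map φ) := by
  induction l with
  | nil => exact hφ.2.2.2
  | cons a l ih => rw [joinList_cons, hφ.2.1, ih, List.map_cons, joinList_cons]

theorem map_meetList (l : List S) : φ (meetList l) = meetList (l.map φ) := by
  induction l with
  | nil => exact hφ.2.2.2
  | cons a l ih =>
    rcases eq_or_ne l [] with rfl | hl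
    · rfl
    · rw [meetList_cons a hl, hφ.1, ih, List.map_cons, meetList_cons _ (by simpa using hl)]

theorem map_atomTerm {ι : Type*} [Fintype ι] [DecidableEq ι] (v : ι → S) (A : Finset ι)
    (a b : ι) : φ (atomTerm v A a b) = atomTerm (φ ∘ v) A a b := by
  simp only [atomTerm, selector, meetOf, joinOf, hφ.1, hφ.2.2.1, hφ.map_meetList,
    hφ.map_joinList, List.map_map, Function.comp_apply]

theorem map_joinOver {α : Type*} (s : Finset α) (f : α → S) :
    φ (joinOver s f) = joinOver s (φ ∘ f) := by
  rw [joinOver, hφ.map_joinList, List.map_map, joinOver]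

end IsHom

end Homomorphisms

section Atoms

variable {S T : Type u} [SBA S] [SBA T] {f : S → T}

theorem IsHom.nle_iff (hf : IsHom f) (hinj : Function.Injective f) {x y : S} :
    nle (f x) (f y) ↔ nle x y := by
  simp only [nle, ← hf.1, hinj.eq_iff]

theorem IsHom.isAtom_apply_iff (hf : IsHom f) (hbij : Function.Bijective f) {a : S} :
    IsAtom (f a) ↔ IsAtom a := by
  have hzero : ∀ {x : S}, f x = zero ↔ x = zero := fun {x} => by
    rw [← hf.2.2.2, hbij.1.eq_iff]
  constructor
  · refine fun ⟨hfa, h⟩ => ⟨fun ha => hfa (hzero.mpr ha), fun x hx => ?_⟩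
    rcases h (f x) ((hf.nle_iff hbij.1).mpr hx) with h0 | h0
    · exact Or.inl (hzero.mp h0)
    · exact Or.inr (hbij.1 h0)
  · refine fun ⟨ha, h⟩ => ⟨fun hfa => ha (hzero.mp hfa), fun y hy => ?_⟩
    obtain ⟨x, rfl⟩ := hbij.2 y
    rcases h x ((hf.nle_iff hbij.1).mp hy) with rfl | rfl
    · exact Or.inl hf.2.2.2
    · exact Or.inr rfl

theorem IsHom.setOf_isAtom_eq_preimage (hf : IsHom f) (hbij : Function.Bijective f) :
    {a : S | IsAtom a} = f ⁻¹' {b : T | IsAtom b} :=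
  Set.ext fun _ => (hf.isAtom_apply_iff hbij).symm

end Atoms

/-! ### The free algebra as a product of primitive algebras -/

/-- The primitive skew Boolean algebra: the rectangular band on `α × α`, in which
`(a, b) ⋏ (c, d) = (a, d)` and `(a, b) ⋎ (c, d) = (c, b)`, with a zero `none` adjoined. -/
instance instOptionProd (α : Type*) : SBA (Option (α × α)) where
  wedge
    | some p, some q => some (p.1, q.2)
    | _, _ => none
  vee
    | some p, some q => some (q.1, p.2)
    | some p, none => some p
    | none, y => y
  diff
    | x, none => x
    | _, some _ => none
  zero := none
  wedge_assoc := by rintro (_ | x) (_ | y) (_ | z) <;> rfl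
  vee_assoc := by rintro (_ | x) (_ | y) (_ | z) <;> rfl
  absorb1 := by rintro (_ | x) (_ | y) <;> rfl
  absorb2 := by rintro (_ | x) (_ | y) <;> rfl
  absorb3 := by rintro (_ | x) (_ | y) <;> rfl
  absorb4 := by rintro (_ | x) (_ | y) <;> rfl
  sdistrib1 := by rintro (_ | x) (_ | y) (_ | z) <;> rfl
  sdistrib2 := by rintro (_ | x) (_ | y) (_ | z) <;> rfl
  zero_wedge := by rintro (_ | x) <;> rfl
  wedge_zero := by rintro (_ | x) <;> rfl
  zero_vee := by rintro (_ | x) <;> rfl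
  vee_zero := by rintro (_ | x) <;> rfl
  diff_ax1 := by rintro (_ | x) (_ | y) <;> rfl
  diff_ax2 := by rintro (_ | x) (_ | y) <;> rfl
  diff_ax3 := by rintro (_ | x) (_ | y) <;> rfl

instance instPi {ι : Type*} (β : ι → Type*) [∀ i, SBA (β i)] : SBA (∀ i, β i) where
  wedge f g i := f i ⋏ g i
  vee f g i := f i ⋎ g i
  diff f g i := f i ∖ g i
  zero _ := zero
  wedge_assoc _ _ _ := funext fun _ => wedge_assoc _ _ _
  vee_assoc _ _ _ := funext fun _ => vee_assoc _ _ _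
  absorb1 _ _ := funext fun _ => absorb1 _ _
  absorb2 _ _ := funext fun _ => absorb2 _ _
  absorb3 _ _ := funext fun _ => absorb3 _ _
  absorb4 _ _ := funext fun _ => absorb4 _ _
  sdistrib1 _ _ _ := funext fun _ => sdistrib1 _ _ _
  sdistrib2 _ _ _ := funext fun _ => sdistrib2 _ _ _
  zero_wedge _ := funext fun _ => zero_wedge _
  wedge_zero _ := funext fun _ => wedge_zero _
  zero_vee _ := funext fun _ => zero_vee _
  vee_zero _ := funext fun _ => vee_zero _
  diff_ax1 _ _ := funext fun _ => diff_ax1 _ _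
  diff_ax2 _ _ := funext fun _ => diff_ax2 _ _
  diff_ax3 _ _ := funext fun _ => diff_ax3 _ _

theorem isHom_eval {ι : Type u} {β : ι → Type u} [∀ i, SBA (β i)] (i : ι) :
    IsHom (fun w : ∀ i, β i => w i) :=
  ⟨fun _ _ => rfl, fun _ _ => rfl, fun _ _ => rfl, rfl⟩

theorem nle_apply {ι : Type*} {β : ι → Type*} [∀ i, SBA (β i)] {x y : ∀ i, β i} (h : nle x y)
    (i : ι) : nle (x i) (y i) :=
  ⟨congrFun h.1 i, congrFun h.2 i⟩

section Primitive

variable {α : Type*}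

theorem meetList_eq_some {l : List (Option (α × α))} (hl : l ≠ []) (h : ∀ x ∈ l, x ≠ none) :
    ∃ p, meetList l = some p := by
  induction l with
  | nil => exact absurd rfl hl
  | cons a l ih =>
    obtain ⟨p, rfl⟩ := Option.ne_none_iff_exists'.mp (h a (by simp))
    rcases eq_or_ne l [] with rfl | hl'
    · exact ⟨p, rfl⟩
    · obtain ⟨q, hq⟩ := ih hl' fun x hx => h x (by simp [hx])
      exact ⟨(p.1, q.2), by rw [meetList_cons _ hl', hq]; rfl⟩

theorem joinList_ne_none {l : List (Option (α × α))} {x : Option (α × α)} (hx : x ∈ l)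
    (h : x ≠ none) : joinList l ≠ none := by
  induction l with
  | nil => simp at hx
  | cons a l ih =>
    rw [joinList_cons]
    rcases List.mem_cons.mp hx with rfl | hx'
    · obtain ⟨p, rfl⟩ := Option.ne_none_iff_exists'.mp h
      cases joinList l <;> simp [vee]
    · obtain ⟨q, hq⟩ := Option.ne_none_iff_exists'.mp (ih hx')
      rw [hq]
      cases a <;> simp [vee]

theorem eq_none_of_nle_none {x : Option (α × α)} (h : nle x none) : x = none :=
  h.1.symm.trans (wedge_zero x)

theorem eq_none_or_eq_of_nle_some {x : Option (α × α)} {p : α × α}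
    (h : nle x (some p)) : x = none ∨ x = some p := by
  rcases x with _ | q
  · exact Or.inl rfl
  · have h1 : some (q.1, p.2) = some q := h.1
    have h2 : some (p.1, q.2) = some q := h.2
    simp only [Option.some.injEq, Prod.ext_iff] at h1 h2
    exact Or.inr (congrArg some (Prod.ext h2.1.symm h1.2.symm))

theorem diff_some (x : Option (α × α)) (p : α × α) : x ∖ some p = none := by
  cases x <;> rfl

end Primitive

end SBA

open Finset in
theorem Finset.two_mul_sum_powerset_card {α : Type*} [DecidableEq α] (s : Finset α) :
    2 * ∑ A ∈ s.powerset, #A = #s * 2 ^ #s := by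
  induction s using Finset.induction_on with
  | empty => simp
  | @insert a s ha ih =>
    have hcard : ∀ A ∈ s.powerset, #(insert a A) = #A + 1 := fun A hA =>
      card_insert_of_notMem fun h => ha (mem_powerset.mp hA h)
    rw [sum_powerset_insert ha, sum_congr rfl hcard, sum_add_distrib, card_insert_of_notMem ha]
    simp only [sum_const, card_powerset, smul_eq_mul, mul_one]
    linear_combination (norm := ring_nf) 2 * ih

open Finset in
theorem Finset.four_mul_sum_powerset_card_sq {α : Type*} [DecidableEq α] (s : Finset α) :
    4 * ∑ A ∈ s.powerset, #A ^ 2 = #s * (#s + 1) * 2 ^ #s := by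
  induction s using Finset.induction_on with
  | empty => simp
  | @insert a s ha ih =>
    have hcard : ∀ A ∈ s.powerset, #(insert a A) ^ 2 = #A ^ 2 + 2 * #A + 1 := fun A hA => by
      rw [card_insert_of_notMem fun h => ha (mem_powerset.mp hA h)]; ring
    rw [sum_powerset_insert ha, sum_congr rfl hcard, sum_add_distrib, sum_add_distrib,
      ← mul_sum, card_insert_of_notMem ha]
    simp only [sum_const, card_powerset, smul_eq_mul, mul_one]
    linear_combination (norm := ring_nf) 2 * ih + 4 * s.two_mul_sum_powerset_card

/-- The algebra `∏_{A ⊆ ι} ({0} ∪ A × A)`; the factor of `A = ∅` is trivial. -/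
abbrev FreeModel (ι : Type*) := ∀ A : Finset ι, Option (A × A)

namespace FreeModel

variable {ι : Type u} [DecidableEq ι]

def gen (i : ι) : FreeModel ι := fun A => if h : i ∈ A then some (⟨i, h⟩, ⟨i, h⟩) else none

theorem gen_of_mem {i : ι} {A : Finset ι} (h : i ∈ A) : gen i A = some (⟨i, h⟩, ⟨i, h⟩) :=
  dif_pos h

theorem gen_of_notMem {i : ι} {A : Finset ι} (h : i ∉ A) : gen i A = zero :=
  dif_neg h

def single (A : Finset ι) (p : A × A) : FreeModel ι := Function.update zero A (some p)

theorem single_self (A : Finset ι) (p : A × A) : single A p A = some p :=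
  Function.update_self _ _ _

theorem single_of_ne {A B : Finset ι} (p : A × A) (h : B ≠ A) : single A p B = none :=
  Function.update_of_ne h _ _

theorem isAtom_single (A : Finset ι) (p : A × A) : IsAtom (single A p) := by
  refine ⟨fun h => Option.some_ne_none p ((single_self A p).symm.trans (congrFun h A)),
    fun x hx => ?_⟩
  have hoff : ∀ B ≠ A, x B = none := fun B hB =>
    eq_none_of_nle_none (single_of_ne p hB ▸ nle_apply hx B)
  rcases eq_none_or_eq_of_nle_some (single_self A p ▸ nle_apply hx A) with h | h
  · refine Or.inl (funext fun B => ?_)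
    rcases eq_or_ne B A with rfl | hB
    · exact h
    · exact hoff B hB
  · refine Or.inr (funext fun B => ?_)
    rcases eq_or_ne B A with rfl | hB
    · rw [h, single_self]
    · rw [hoff B hB, single_of_ne p hB]

theorem eq_single_of_isAtom {w : FreeModel ι} (hw : IsAtom w) {A : Finset ι} {p : A × A}
    (hp : w A = some p) : w = single A p := by
  have hle : nle (single A p) w := by
    constructor <;> funext B <;> rcases eq_or_ne B A with rfl | hB
    · show single B p B ⋏ w B = single B p B
      rw [single_self, hp]; rfl
    · show single A p B ⋏ w B = single A p B
      rw [single_of_ne p hB]; rfl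
    · show w B ⋏ single B p B = single B p B
      rw [single_self, hp]; rfl
    · show w B ⋏ single A p B = single A p B
      rw [single_of_ne p hB]; exact wedge_zero (w B)
  rcases hw.2 _ hle with h | h
  · exact absurd ((single_self A p).symm.trans (congrFun h A)) (Option.some_ne_none p)
  · exact h.symm

theorem single_injective :
    Function.Injective fun s : Σ A : Finset ι, A × A => single s.1 s.2 := by
  rintro ⟨A, p⟩ ⟨B, q⟩ h
  have hAB : A = B := by
    by_contra hne
    simpa [single, hne] using congrFun h A
  subst hAB
  simpa [single] using congrFun h A

theorem setOf_isAtom_eq_range :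
    {w : FreeModel ι | IsAtom w} = Set.range fun s : Σ A : Finset ι, A × A => single s.1 s.2 := by
  ext w
  refine ⟨fun hw => ?_, fun ⟨s, hs⟩ => hs ▸ isAtom_single s.1 s.2⟩
  obtain ⟨A, hA⟩ : ∃ A, w A ≠ none := by
    by_contra! h
    exact hw.1 (funext h)
  obtain ⟨p, hp⟩ := Option.ne_none_iff_exists'.mp hA
  exact ⟨⟨A, p⟩, (eq_single_of_isAtom hw hp).symm⟩

section Lift

variable [Fintype ι] {T : Type u} [SBA T] (v : ι → T)

noncomputable def liftFactor (A : Finset ι) (x : Option (A × A)) : T :=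
  x.elim zero fun p => atomTerm v A p.1 p.2

noncomputable def lift (w : FreeModel ι) : T := joinOver Finset.univ fun A => liftFactor v A (w A)

theorem isHom_liftFactor (A : Finset ι) : IsHom (liftFactor v A) := by
  refine ⟨?_, ?_, ?_, rfl⟩ <;> rintro (_ | ⟨a, b⟩) (_ | ⟨c, d⟩)
  · exact (zero_wedge (S := T) zero).symm
  · exact (zero_wedge (S := T) _).symm
  · exact (wedge_zero (S := T) _).symm
  · exact (atomTerm_wedge_atomTerm b.2 c.2).symm
  · exact (vee_zero (S := T) zero).symm
  · exact (zero_vee (S := T) _).symm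
  · exact (vee_zero (S := T) _).symm
  · exact (atomTerm_vee_atomTerm a.2 b.2 c.2 d.2).symm
  · exact (diff_zero (S := T) zero).symm
  · exact (zero_diff (S := T) _).symm
  · exact (diff_zero (S := T) _).symm
  · exact (atomTerm_diff_atomTerm a.2 b.2 c.2 d.2).symm

theorem orthogonal_liftFactor (w w' : FreeModel ι) :
    Orthogonal (fun A => liftFactor v A (w A)) (fun A => liftFactor v A (w' A)) := by
  intro A B hAB
  dsimp only
  rcases w A with _ | ⟨a, b⟩
  · exact zero_wedge _
  rcases w' B with _ | ⟨c, d⟩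
  · exact wedge_zero _
  exact atomTerm_wedge_atomTerm_of_ne hAB

theorem isHom_lift : IsHom (lift v) := by
  have hnd := Finset.nodup_toList (Finset.univ : Finset (Finset ι))
  have h := orthogonal_liftFactor v
  refine ⟨fun w w' => ?_, fun w w' => ?_, fun w w' => ?_, ?_⟩
  · simp only [lift, joinOver]
    rw [(h w w').joinList_map_wedge hnd]
    exact congrArg joinList (List.map_congr_left fun A _ => (isHom_liftFactor v A).1 _ _)
  · simp only [lift, joinOver]
    rw [(h w w').joinList_map_vee (h w' w) hnd]
    exact congrArg joinList (List.map_congr_left fun A _ => (isHom_liftFactor v A).2.1 _ _)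
  · simp only [lift, joinOver]
    rw [(h w w').joinList_map_diff (h w' w) (h w w) hnd]
    exact congrArg joinList (List.map_congr_left fun A _ => (isHom_liftFactor v A).2.2.1 _ _)
  · exact joinOver_eq_zero fun A _ => (isHom_liftFactor v A).2.2.2

theorem lift_gen (i : ι) : lift v (gen i) = v i := by
  rw [← joinOver_atomTerm_self v i, lift]
  refine joinOver_congr fun A _ => ?_
  by_cases hi : i ∈ A <;> simp [gen, liftFactor, hi]

theorem _root_.SBA.IsHom.map_lift {S : Type u} [SBA S] {φ : T → S} (hφ : IsHom φ)
    (w : FreeModel ι) : φ (lift v w) = lift (φ ∘ v) w := by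
  rw [lift, hφ.map_joinOver, lift]
  refine joinOver_congr fun A _ => ?_
  show φ (liftFactor v A (w A)) = liftFactor (φ ∘ v) A (w A)
  rcases w A with _ | ⟨a, b⟩
  · exact hφ.2.2.2
  · exact hφ.map_atomTerm v A a b

end Lift

variable [Fintype ι] {A B : Finset ι}

theorem selector_gen_of_ne (hBA : B ≠ A) : selector (fun i => gen i A) B = zero := by
  by_cases hsub : B ⊆ A
  · obtain ⟨j, hjA, hjB⟩ := Finset.exists_of_ssubset (Finset.ssubset_iff_subset_ne.mpr ⟨hsub, hBA⟩)
    have hj : j ∈ Bᶜ.toList := Finset.mem_toList.mpr (Finset.mem_compl.mpr hjB)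
    obtain ⟨r, hr⟩ := Option.ne_none_iff_exists'.mp
      (joinList_ne_none (List.mem_map_of_mem (f := fun i => gen i A) hj)
        (by simp [gen_of_mem hjA]))
    rw [selector, joinOf, hr, diff_some]
    rfl
  · obtain ⟨j, hjB, hjA⟩ := Finset.not_subset.mp hsub
    rw [selector, meetOf, meetList_eq_zero, zero_diff]
    exact List.mem_map.mpr ⟨j, Finset.mem_toList.mpr hjB, gen_of_notMem hjA⟩

theorem liftFactor_gen_of_ne (hBA : B ≠ A) (x : Option (B × B)) :
    liftFactor (fun i => gen i A) B x = zero := by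
  rcases x with _ | ⟨a, b⟩
  · rfl
  · rw [liftFactor, Option.elim_some, atomTerm, selector_gen_of_ne hBA, wedge_zero, zero_wedge]

theorem liftFactor_gen_self (x : Option (A × A)) : liftFactor (fun i => gen i A) A x = x := by
  rcases x with _ | ⟨a, b⟩
  · rfl
  have hmeet : ∃ r, meetOf (fun i => gen i A) A = some r :=
    meetList_eq_some (by simpa using Finset.ne_empty_of_mem a.2)
      (by simp only [List.mem_map, Finset.mem_toList]
          rintro _ ⟨j, hj, rfl⟩
          simp [gen_of_mem hj])
  have hjoin : joinOf (fun i => gen i A) Aᶜ = zero :=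
    joinList_eq_zero (by simp +contextual [gen_of_notMem])
  obtain ⟨r, hr⟩ := hmeet
  rw [liftFactor, Option.elim_some, atomTerm, selector, hr, hjoin, diff_zero, gen_of_mem a.2,
    gen_of_mem b.2]
  rfl

theorem lift_gen_self (w : FreeModel ι) : lift gen w = w := by
  funext A
  rw [show lift gen w A = lift (fun i => gen i A) w from (isHom_eval A).map_lift gen w, lift,
    joinOver, joinList_map_eq_single (Finset.nodup_toList _) (by simp)
      (fun B _ hBA => liftFactor_gen_of_ne hBA (w B)), liftFactor_gen_self]

theorem ncard_setOf_isAtom :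
    {w : FreeModel ι | IsAtom w}.ncard = ∑ A : Finset ι, A.card ^ 2 := by
  rw [setOf_isAtom_eq_range, ← Set.image_univ, Set.ncard_image_of_injective _ single_injective,
    Set.ncard_univ, Nat.card_eq_fintype_card, Fintype.card_sigma]
  simp [sq]

theorem four_mul_ncard_setOf_isAtom :
    4 * {w : FreeModel ι | IsAtom w}.ncard =
      Fintype.card ι * (Fintype.card ι + 1) * 2 ^ Fintype.card ι := by
  rw [ncard_setOf_isAtom, ← Finset.powerset_univ,
    Finset.four_mul_sum_powerset_card_sq, Finset.card_univ]

end FreeModel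

theorem FreelyGenerates.exists_isHom_bijective {S : Type u} [SBA S] {X : Set S} [Fintype X]
    [DecidableEq X] (hfree : FreelyGenerates S X) :
    ∃ f : S → FreeModel X, IsHom f ∧ Function.Bijective f := by
  obtain ⟨hgen, hlift⟩ := hfree
  obtain ⟨f, hf, hfX⟩ := hlift (FreeModel X) FreeModel.gen
  have hg : IsHom (FreeModel.lift (Subtype.val : X → S)) := FreeModel.isHom_lift _
  have hgf : FreeModel.lift Subtype.val ∘ f = id :=
    hgen.hom_ext (hg.comp hf) isHom_id fun x hx => by
      rw [Function.comp_apply, hfX ⟨x, hx⟩, FreeModel.lift_gen, id]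
  have hfg : f ∘ FreeModel.lift Subtype.val = id := funext fun w => by
    rw [Function.comp_apply, hf.map_lift, show f ∘ Subtype.val = FreeModel.gen from funext hfX,
      FreeModel.lift_gen_self, id]
  exact ⟨f, hf, (Function.leftInverse_iff_comp.mpr hgf).injective,
    (Function.rightInverse_iff_comp.mpr hfg).surjective⟩

theorem stmt9_general (n : ℕ) (S : Type u) [SBA S]
    (x : Fin n → S) (hinj : Function.Injective x)
    (hfree : FreelyGenerates S (Set.range x)) :
    {a : S | SBA.IsAtom a}.Finite ∧
      4 * {a : S | SBA.IsAtom a}.ncard = n * (n + 1) * 2 ^ n := by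
  classical
  obtain ⟨f, hf, hbij⟩ := hfree.exists_isHom_bijective
  have hcard : Fintype.card (Set.range x) = n := by
    rw [Set.card_range_of_injective hinj, Fintype.card_fin]
  rw [hf.setOf_isAtom_eq_preimage hbij]
  refine ⟨(Set.toFinite _).preimage hbij.1.injOn, ?_⟩
  rw [Set.ncard_preimage_of_injective_subset_range hbij.1 (by simp [hbij.2.range_eq]),
    FreeModel.four_mul_ncard_setOf_isAtom, hcard]

theorem stmt9 (n : ℕ) (hn : 1 ≤ n) (S : Type u) [SBA S]
    (x : Fin n → S) (hinj : Function.Injective x)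
    (hfree : FreelyGenerates S (Set.range x)) :
    {a : S | SBA.IsAtom a}.Finite ∧
      4 * {a : S | SBA.IsAtom a}.ncard = n * (n + 1) * 2 ^ n :=
  stmt9_general n S x hinj hfree
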